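/- Let n ≥ 2 and let b_1,…,b_n be unit vectors in ℝ^d for any d ≥ n. Then there exist unit vectors c_1,…,c_n in ℝ^{n−1} such that Σ_{1≤i<j≤n} ‖c_i − c_j‖ ≥ Σ_{1≤i<j≤n} ‖b_i − b_j‖. Consequently, the supremum of Σ_{i<j} ‖b_i − b_j‖ over unit vectors in ℝ^d for d ≥ n−1 is independent of d, i.e., E(n, n−1) = E(n, d) for all d ≥ n−1. -/

import Mathlib

open Module Finset

/-!
The differences `b i - b j` of `n` unit vectors span a space `V` of dimension at most `n - 1`.
All `b i` lie in the affine subspace `p + V`, where `p ⊥ V`, hence on a sphere in it centred at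
`p` of radius `r = √(1 - ‖p‖²) ≤ 1`. Identifying `V` isometrically with a subspace of `ℝ^(n-1)`
and scaling by `r⁻¹` gives unit vectors whose pairwise distances are those of the `b i`
multiplied by `r⁻¹ ≥ 1`.
-/

section Sphere

variable {ι E F : Type*} [NormedAddCommGroup E] [InnerProductSpace ℝ E]

theorem exists_center_sub_mem_norm_eq [Nonempty ι] (V : Submodule ℝ E) [V.HasOrthogonalProjection]
    {R : ℝ} (b : ι → E) (hb : ∀ i, ‖b i‖ = R) (hV : ∀ i j, b i - b j ∈ V) :
    ∃ p : E, ∃ r ≤ R, ∀ i, b i - p ∈ V ∧ ‖b i - p‖ = r := by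
  obtain ⟨i₀⟩ := ‹Nonempty ι›
  -- `p` is the foot of the perpendicular from `0` to the affine subspace `b i₀ + V`.
  set p := b i₀ - V.starProjection (b i₀)
  have hp : p ∈ Vᗮ := V.sub_starProjection_mem_orthogonal (b i₀)
  have hbp : ∀ i, b i - p ∈ V := fun i => by
    simpa [p, sub_sub_eq_add_sub, add_sub_right_comm] using
      V.add_mem (hV i i₀) (V.starProjection_apply_mem (b i₀))
  have hpyth : ∀ i, ‖b i - p‖ ^ 2 = R ^ 2 - ‖p‖ ^ 2 := fun i => by
    have h := norm_add_sq_eq_norm_sq_add_norm_sq_of_inner_eq_zero (b i - p) p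
      (V.inner_right_of_mem_orthogonal (hbp i) hp)
    rw [sub_add_cancel, hb i] at h
    linarith
  have hR : 0 ≤ R := hb i₀ ▸ norm_nonneg _
  refine ⟨p, ‖b i₀ - p‖, ?_, fun i => ⟨hbp i, ?_⟩⟩
  · have := hpyth i₀
    nlinarith [norm_nonneg p, norm_nonneg (b i₀ - p)]
  · rw [← sq_eq_sq₀ (norm_nonneg _) (norm_nonneg _), hpyth, hpyth]

variable [NormedAddCommGroup F] [NormedSpace ℝ F] [Nontrivial F]

theorem exists_norm_eq_one_dist_le_of_norm_eq {r : ℝ} (hr : r ≤ 1) (v : ι → F)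
    (hv : ∀ i, ‖v i‖ = r) : ∃ c : ι → F, (∀ i, ‖c i‖ = 1) ∧ ∀ i j, ‖v i - v j‖ ≤ ‖c i - c j‖ := by
  rcases le_or_gt r 0 with hr₀ | hr₀
  · have hv₀ : ∀ i, v i = 0 := fun i => norm_le_zero_iff.mp (hv i ▸ hr₀)
    obtain ⟨u, hu⟩ := exists_norm_eq F zero_le_one
    exact ⟨fun _ => u, fun _ => hu, fun i j => by simp [hv₀]⟩
  · refine ⟨fun i => r⁻¹ • v i, fun i => ?_, fun i j => ?_⟩
    · rw [norm_smul, hv, norm_inv, Real.norm_of_nonneg hr₀.le, inv_mul_cancel₀ hr₀.ne']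
    · rw [← smul_sub, norm_smul, norm_inv, Real.norm_of_nonneg hr₀.le]
      exact le_mul_of_one_le_left (norm_nonneg _) (one_le_inv₀ hr₀ |>.mpr hr)

end Sphere

theorem exists_linearIsometry_of_finrank_le {E F : Type*} [NormedAddCommGroup E]
    [InnerProductSpace ℝ E] [FiniteDimensional ℝ E] [NormedAddCommGroup F]
    [InnerProductSpace ℝ F] [FiniteDimensional ℝ F] (h : finrank ℝ E ≤ finrank ℝ F) :
    Nonempty (E →ₗᵢ[ℝ] F) := by
  let bE := (stdOrthonormalBasis ℝ E).toBasis
  let v := stdOrthonormalBasis ℝ F ∘ Fin.castLE h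
  have hv : Orthonormal ℝ v :=
    (stdOrthonormalBasis ℝ F).orthonormal.comp _ (Fin.castLE_injective h)
  refine ⟨(bE.constr ℝ v).isometryOfOrthonormal (v := bE) ?_ ?_⟩
  · simp [bE]
  · convert hv
    ext1 i
    exact bE.constr_basis ℝ v i

theorem exists_norm_eq_one_dist_le_of_card_le {ι E F : Type*} [Fintype ι] [Nonempty ι]
    [NormedAddCommGroup E] [InnerProductSpace ℝ E] [NormedAddCommGroup F]
    [InnerProductSpace ℝ F] [FiniteDimensional ℝ F] [Nontrivial F]
    (hcard : Fintype.card ι ≤ finrank ℝ F + 1) (b : ι → E) (hb : ∀ i, ‖b i‖ = 1) :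
    ∃ c : ι → F, (∀ i, ‖c i‖ = 1) ∧ ∀ i j, ‖b i - b j‖ ≤ ‖c i - c j‖ := by
  set V := vectorSpan ℝ (Set.range b)
  have hV : ∀ i j, b i - b j ∈ V := fun i j =>
    vsub_mem_vectorSpan ℝ (Set.mem_range_self i) (Set.mem_range_self j)
  have hrank : finrank ℝ V ≤ finrank ℝ F :=
    (finrank_vectorSpan_range_le ℝ b (Nat.sub_one_add_one Fintype.card_ne_zero).symm).trans
      (by omega)
  obtain ⟨f⟩ := exists_linearIsometry_of_finrank_le hrank
  obtain ⟨p, r, hr, hp⟩ := exists_center_sub_mem_norm_eq V b hb hV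
  obtain ⟨c, hc, hdist⟩ := exists_norm_eq_one_dist_le_of_norm_eq hr
    (fun i => f ⟨b i - p, (hp i).1⟩) (fun i => by simpa using (hp i).2)
  refine ⟨c, hc, fun i j => le_of_eq_of_le ?_ (hdist i j)⟩
  rw [← f.map_sub, f.norm_map, ← sub_sub_sub_cancel_right (b i) (b j) p]
  rfl

section PairwiseDistSum

variable {E F : Type*}

def pairwiseDistSum [SeminormedAddCommGroup E] {n : ℕ} (b : Fin n → E) : ℝ :=
  ∑ i, ∑ j ∈ Ioi i, ‖b i - b j‖

def unitPairwiseDistSums (n : ℕ) (E : Type*) [SeminormedAddCommGroup E] : Set ℝ :=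
  {x | ∃ b : Fin n → E, (∀ i, ‖b i‖ = 1) ∧ x = pairwiseDistSum b}

variable {n : ℕ}

section Seminormed

variable [SeminormedAddCommGroup E] [SeminormedAddCommGroup F]

theorem pairwiseDistSum_le_pairwiseDistSum {b : Fin n → E} {c : Fin n → F}
    (h : ∀ i j, ‖b i - b j‖ ≤ ‖c i - c j‖) : pairwiseDistSum b ≤ pairwiseDistSum c := by
  unfold pairwiseDistSum
  gcongr with i _ j _
  exact h i j

theorem bddAbove_unitPairwiseDistSums : BddAbove (unitPairwiseDistSums n E) := by
  refine ⟨∑ i : Fin n, ∑ j ∈ Ioi i, 2, ?_⟩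
  rintro x ⟨b, hb, rfl⟩
  unfold pairwiseDistSum
  gcongr with i _ j _
  calc ‖b i - b j‖ ≤ ‖b i‖ + ‖b j‖ := norm_sub_le _ _
    _ = 2 := by rw [hb, hb]; norm_num

end Seminormed

variable [NormedAddCommGroup E] [NormedSpace ℝ E] [NormedAddCommGroup F] [NormedSpace ℝ F]

theorem pairwiseDistSum_comp_linearIsometry (f : F →ₗᵢ[ℝ] E) (c : Fin n → F) :
    pairwiseDistSum (f ∘ c) = pairwiseDistSum c := by
  simp only [pairwiseDistSum, Function.comp_apply, ← f.map_sub, f.norm_map]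

theorem unitPairwiseDistSums_subset (f : F →ₗᵢ[ℝ] E) :
    unitPairwiseDistSums n F ⊆ unitPairwiseDistSums n E := by
  rintro x ⟨c, hc, rfl⟩
  exact ⟨f ∘ c, fun i => by simp [hc], (pairwiseDistSum_comp_linearIsometry f c).symm⟩

theorem unitPairwiseDistSums_nonempty [Nontrivial E] : (unitPairwiseDistSums n E).Nonempty := by
  obtain ⟨u, hu⟩ := exists_norm_eq E zero_le_one
  exact ⟨_, fun _ => u, fun _ => hu, rfl⟩

theorem sSup_unitPairwiseDistSums_eq [Nontrivial F] (f : F →ₗᵢ[ℝ] E)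
    (h : ∀ b : Fin n → E, (∀ i, ‖b i‖ = 1) →
      ∃ c : Fin n → F, (∀ i, ‖c i‖ = 1) ∧ pairwiseDistSum b ≤ pairwiseDistSum c) :
    sSup (unitPairwiseDistSums n E) = sSup (unitPairwiseDistSums n F) := by
  refine le_antisymm ?_ (csSup_le_csSup bddAbove_unitPairwiseDistSums
    unitPairwiseDistSums_nonempty (unitPairwiseDistSums_subset f))
  refine csSup_le (unitPairwiseDistSums_nonempty.mono (unitPairwiseDistSums_subset f)) ?_
  rintro x ⟨b, hb, rfl⟩
  obtain ⟨c, hc, hle⟩ := h b hb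
  exact hle.trans (le_csSup bddAbove_unitPairwiseDistSums ⟨c, hc, rfl⟩)

end PairwiseDistSum

theorem stmt5 (n : ℕ) (hn : 2 ≤ n) :
    (∀ d : ℕ, n ≤ d → ∀ b : Fin n → EuclideanSpace ℝ (Fin d), (∀ i, ‖b i‖ = 1) →
      ∃ c : Fin n → EuclideanSpace ℝ (Fin (n - 1)), (∀ i, ‖c i‖ = 1) ∧
        (∑ i, ∑ j ∈ Finset.Ioi i, ‖b i - b j‖) ≤ ∑ i, ∑ j ∈ Finset.Ioi i, ‖c i - c j‖) ∧
    (∀ d : ℕ, n - 1 ≤ d →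
      sSup {x : ℝ | ∃ b : Fin n → EuclideanSpace ℝ (Fin d), (∀ i, ‖b i‖ = 1) ∧
          x = ∑ i, ∑ j ∈ Finset.Ioi i, ‖b i - b j‖} =
      sSup {x : ℝ | ∃ b : Fin n → EuclideanSpace ℝ (Fin (n - 1)), (∀ i, ‖b i‖ = 1) ∧
          x = ∑ i, ∑ j ∈ Finset.Ioi i, ‖b i - b j‖}) := by
  have : NeZero n := ⟨by omega⟩
  have : NeZero (n - 1) := ⟨by omega⟩
  have reduce : ∀ d (b : Fin n → EuclideanSpace ℝ (Fin d)), (∀ i, ‖b i‖ = 1) →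
      ∃ c : Fin n → EuclideanSpace ℝ (Fin (n - 1)), (∀ i, ‖c i‖ = 1) ∧
        pairwiseDistSum b ≤ pairwiseDistSum c := fun d b hb => by
    obtain ⟨c, hc, hdist⟩ := exists_norm_eq_one_dist_le_of_card_le
      (F := EuclideanSpace ℝ (Fin (n - 1))) (by simp; omega) b hb
    exact ⟨c, hc, pairwiseDistSum_le_pairwiseDistSum hdist⟩
  refine ⟨fun d _ => reduce d, fun d hd => ?_⟩
  obtain ⟨f⟩ := exists_linearIsometry_of_finrank_le
    (E := EuclideanSpace ℝ (Fin (n - 1))) (F := EuclideanSpace ℝ (Fin d)) (by simpa using hd)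
  exact sSup_unitPairwiseDistSums_eq f (reduce d)
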